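/- (continuity of the piecewise Lyapunov function in Theorem 3.5) Let P_1, P_2 ∈ ℝ^{n×n} be symmetric, b_1, b_2 ∈ ℝⁿ and ẽ_1, ẽ_2 ∈ ℝ, and suppose condition (15) holds: Tᵀ [[P_1 − P_2, b_1 − b_2],[(b_1 − b_2)ᵀ, ẽ_1 − ẽ_2]] T = 0, where T is the (n+1)×(2n−1) matrix whose columns are (r_0;1) and the columns of (R̂;0) and (−R̂;0). Then the function V(x) = xᵀP_1x + 2b_1ᵀx + ẽ_1 for cᵀx + f < 0, V(x) = xᵀP_2x + 2b_2ᵀx + ẽ_2 for cᵀx + f ≥ 0, is continuous on ℝⁿ. -/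

import Mathlib

open Matrix

noncomputable section

/-- The n×(n−1) matrix R̂ (state dimension is `n+1`, so R̂ has `n` columns):
first row `(−c₂/c₁, …, −c_n/c₁)`, lower block the identity. -/
def Rhat {n : ℕ} (c : Fin (n+1) → ℝ) : Matrix (Fin (n+1)) (Fin n) ℝ :=
  Matrix.of fun i j =>
    Fin.cases (motive := fun _ => ℝ) (-(c j.succ) / c 0)
      (fun k => if k = j then (1:ℝ) else 0) i

/-- The vector `r₀ = (−f/c₁, 0, …, 0)ᵀ`. -/
def rZero {n : ℕ} (c : Fin (n+1) → ℝ) (f : ℝ) : Fin (n+1) → ℝ :=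
  fun i => if i = 0 then -f / c 0 else 0

/-- The symmetric block matrix `[[P, b],[bᵀ, e]]`. -/
def quadMat {N : Type*} (P : Matrix N N ℝ) (b : N → ℝ) (e : ℝ) :
    Matrix (N ⊕ Unit) (N ⊕ Unit) ℝ :=
  Matrix.fromBlocks P (Matrix.of fun i _ => b i) (Matrix.of fun _ j => b j)
    (Matrix.of fun _ _ => e)

/-- The (n+1)×(2n) matrix with columns `(r₀;1)`, `(u;0)`, the columns of `(R̂;0)`
and the columns of `(−R̂;0)`. -/
def Smat {n : ℕ} (c : Fin (n+1) → ℝ) (f : ℝ) (u : Fin (n+1) → ℝ) :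
    Matrix (Fin (n+1) ⊕ Unit) (Unit ⊕ Unit ⊕ Fin n ⊕ Fin n) ℝ :=
  Matrix.of fun i j =>
    match j with
    | Sum.inl _ => Sum.elim (rZero c f) (fun _ => (1:ℝ)) i
    | Sum.inr (Sum.inl _) => Sum.elim u (fun _ => (0:ℝ)) i
    | Sum.inr (Sum.inr (Sum.inl k)) => Sum.elim (fun i' => Rhat c i' k) (fun _ => (0:ℝ)) i
    | Sum.inr (Sum.inr (Sum.inr k)) => Sum.elim (fun i' => -Rhat c i' k) (fun _ => (0:ℝ)) i

/-- The (n+1)×(2n−1) matrix with columns `(r₀;1)`, the columns of `(R̂;0)`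
and the columns of `(−R̂;0)`. -/
def Tmat {n : ℕ} (c : Fin (n+1) → ℝ) (f : ℝ) :
    Matrix (Fin (n+1) ⊕ Unit) (Unit ⊕ Fin n ⊕ Fin n) ℝ :=
  Matrix.of fun i j =>
    match j with
    | Sum.inl _ => Sum.elim (rZero c f) (fun _ => (1:ℝ)) i
    | Sum.inr (Sum.inl k) => Sum.elim (fun i' => Rhat c i' k) (fun _ => (0:ℝ)) i
    | Sum.inr (Sum.inr k) => Sum.elim (fun i' => -Rhat c i' k) (fun _ => (0:ℝ)) i

/-- `Q >_{ℝ₊^ι} 0` : `zᵀ Q z > 0` for every nonzero entrywise-nonnegative `z`. -/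
def PosOnNonnegOrthant {ι : Type*} [Fintype ι] (Q : Matrix ι ι ℝ) : Prop :=
  ∀ z : ι → ℝ, (∀ j, 0 ≤ z j) → z ≠ 0 → 0 < z ⬝ᵥ Q *ᵥ z

/-!
The two quadratic pieces differ by the quadratic form of `quadMat (P₁ - P₂) (b₁ - b₂) (e₁ - e₂)`
at `(x; 1)`. A point of the switching hyperplane `cᵀx + f = 0` is `x = r₀ + R̂ y` with `y` the last
`n` coordinates of `x`, so `(x; 1) = T w` for `w = (1, y, 0)`, and condition (15) makes the
difference vanish there. The pieces are continuous and agree on the boundary, hence so is `V`.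
-/

theorem Continuous.if_lt {X α β : Type*} [TopologicalSpace X] [LinearOrder α] [TopologicalSpace α]
    [OrderClosedTopology α] [TopologicalSpace β] {f g : X → α} {f' g' : X → β}
    (hf' : Continuous f') (hg' : Continuous g') (hf : Continuous f) (hg : Continuous g)
    (hfg : ∀ x, f x = g x → f' x = g' x) :
    Continuous fun x => if f x < g x then f' x else g' x := by
  simpa only [← not_le, ite_not] using hg'.if_le hf' hg hf fun x hx => (hfg x hx.symm).symm

def quadFun {N : Type*} [Fintype N] (P : Matrix N N ℝ) (b : N → ℝ) (e : ℝ) (x : N → ℝ) : ℝ :=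
  x ⬝ᵥ P *ᵥ x + 2 * (b ⬝ᵥ x) + e

section quadFun

variable {N : Type*} [Fintype N]

theorem continuous_quadFun (P : Matrix N N ℝ) (b : N → ℝ) (e : ℝ) :
    Continuous (quadFun P b e) := by
  unfold quadFun
  fun_prop

theorem quadFun_sub (P₁ P₂ : Matrix N N ℝ) (b₁ b₂ : N → ℝ) (e₁ e₂ : ℝ) (x : N → ℝ) :
    quadFun (P₁ - P₂) (b₁ - b₂) (e₁ - e₂) x = quadFun P₁ b₁ e₁ x - quadFun P₂ b₂ e₂ x := by
  simp only [quadFun, sub_mulVec, dotProduct_sub, sub_dotProduct]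
  ring

theorem sumElim_dotProduct_quadMat_mulVec (P : Matrix N N ℝ) (b : N → ℝ) (e : ℝ) (x : N → ℝ) :
    Sum.elim x 1 ⬝ᵥ quadMat P b e *ᵥ Sum.elim x 1 = quadFun P b e x := by
  simp only [quadMat, quadFun, fromBlocks_mulVec, sumElim_dotProduct_sumElim, Sum.elim_comp_inl,
    Sum.elim_comp_inr, dotProduct_add, two_mul]
  simp only [dotProduct, mulVec, Finset.univ_unique, PUnit.default_eq_unit, of_apply, Pi.one_apply,
    mul_one, Finset.sum_const, Finset.card_singleton, one_smul, mul_comm, one_mul]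
  ring

end quadFun

theorem mulVec_dotProduct_mulVec_mulVec_eq_zero {m n : Type*} [Fintype m] [Fintype n]
    {T : Matrix m n ℝ} {M : Matrix m m ℝ} (h : Tᵀ * M * T = 0) (w : n → ℝ) :
    T *ᵥ w ⬝ᵥ M *ᵥ T *ᵥ w = 0 := by
  have hw : w ⬝ᵥ (Tᵀ * M * T) *ᵥ w = 0 := by simp [h]
  rwa [← mulVec_mulVec, ← mulVec_mulVec, dotProduct_mulVec, vecMul_transpose] at hw

section hyperplane

variable {n : ℕ} {c : Fin (n+1) → ℝ} {f : ℝ}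

theorem Tmat_mulVec_sumElim (y : Fin n → ℝ) :
    Tmat c f *ᵥ Sum.elim 1 (Sum.elim y 0) = Sum.elim (rZero c f + Rhat c *ᵥ y) 1 := by
  funext i
  rcases i with i | _ <;> simp [Tmat, mulVec, dotProduct, Fintype.sum_sum_type]

theorem rZero_add_Rhat_mulVec_tail (hc : c 0 ≠ 0) {x : Fin (n+1) → ℝ} (hx : c ⬝ᵥ x + f = 0) :
    rZero c f + Rhat c *ᵥ Fin.tail x = x := by
  funext i
  induction i using Fin.cases with
  | zero =>
    rw [dotProduct, Fin.sum_univ_succ] at hx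
    simp only [Pi.add_apply, rZero, Rhat, ↓reduceIte, mulVec, dotProduct, of_apply, Fin.cases_zero,
      Fin.tail]
    field_simp
    rw [Finset.sum_neg_distrib, ← Finset.sum_div, mul_neg, mul_div_cancel₀ _ hc]
    linarith
  | succ i => simp [rZero, Rhat, mulVec, dotProduct, Fin.tail, Fin.succ_ne_zero]

theorem quadFun_eq_of_dotProduct_add_eq_zero (hc : c 0 ≠ 0)
    {P₁ P₂ : Matrix (Fin (n+1)) (Fin (n+1)) ℝ} {b₁ b₂ : Fin (n+1) → ℝ} {e₁ e₂ : ℝ}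
    (h15 : (Tmat c f)ᵀ * quadMat (P₁ - P₂) (b₁ - b₂) (e₁ - e₂) * Tmat c f = 0)
    {x : Fin (n+1) → ℝ} (hx : c ⬝ᵥ x + f = 0) :
    quadFun P₁ b₁ e₁ x = quadFun P₂ b₂ e₂ x := by
  have hT := Tmat_mulVec_sumElim (c := c) (f := f) (Fin.tail x)
  rw [rZero_add_Rhat_mulVec_tail hc hx] at hT
  have h := mulVec_dotProduct_mulVec_mulVec_eq_zero h15 (Sum.elim 1 (Sum.elim (Fin.tail x) 0))
  rw [hT, sumElim_dotProduct_quadMat_mulVec, quadFun_sub] at h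
  exact sub_eq_zero.mp h

end hyperplane

theorem piecewise_lyapunov_continuous_general
    (n : ℕ) (c : Fin (n+1) → ℝ) (hc : c 0 ≠ 0) (f : ℝ)
    (P₁ P₂ : Matrix (Fin (n+1)) (Fin (n+1)) ℝ)
    (b₁ b₂ : Fin (n+1) → ℝ) (e₁ e₂ : ℝ)
    (h15 : (Tmat c f)ᵀ * quadMat (P₁ - P₂) (b₁ - b₂) (e₁ - e₂) * Tmat c f = 0)
    (V : (Fin (n+1) → ℝ) → ℝ)
    (hV : ∀ x, V x = if c ⬝ᵥ x + f < 0 then x ⬝ᵥ P₁ *ᵥ x + 2 * (b₁ ⬝ᵥ x) + e₁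
      else x ⬝ᵥ P₂ *ᵥ x + 2 * (b₂ ⬝ᵥ x) + e₂) :
    Continuous V := by
  have hV' : V = fun x => if c ⬝ᵥ x + f < 0 then quadFun P₁ b₁ e₁ x else quadFun P₂ b₂ e₂ x :=
    funext hV
  rw [hV']
  exact (continuous_quadFun P₁ b₁ e₁).if_lt (continuous_quadFun P₂ b₂ e₂) (by fun_prop)
    continuous_const fun x hx => quadFun_eq_of_dotProduct_add_eq_zero hc h15 hx

/-- Continuity of the piecewise quadratic Lyapunov function under condition (15). -/
theorem piecewise_lyapunov_continuous
    (n : ℕ) (c : Fin (n+1) → ℝ) (hc : c 0 ≠ 0) (f : ℝ)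
    (P₁ P₂ : Matrix (Fin (n+1)) (Fin (n+1)) ℝ) (hP₁ : P₁.IsSymm) (hP₂ : P₂.IsSymm)
    (b₁ b₂ : Fin (n+1) → ℝ) (e₁ e₂ : ℝ)
    (h15 : (Tmat c f)ᵀ * quadMat (P₁ - P₂) (b₁ - b₂) (e₁ - e₂) * Tmat c f = 0)
    (V : (Fin (n+1) → ℝ) → ℝ)
    (hV : ∀ x, V x = if c ⬝ᵥ x + f < 0 then x ⬝ᵥ P₁ *ᵥ x + 2 * (b₁ ⬝ᵥ x) + e₁
      else x ⬝ᵥ P₂ *ᵥ x + 2 * (b₂ ⬝ᵥ x) + e₂) :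
    Continuous V :=
  piecewise_lyapunov_continuous_general n c hc f P₁ P₂ b₁ b₂ e₁ e₂ h15 V hV
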